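/- Fix constants b ≥ 1 and κ ∈ ℕ. Let {X_{k,i} : k ∈ {0, 1, …, b}, i ∈ ℕ} be a jointly independent family of identically distributed real-valued random variables with E = 0 and second moment 1. For d > κ let z_{k,s}^{(d)} = (X_{k,0}, …, X_{k,d−κ−1}) ∈ ℝ^{d−κ} be the truncation of z_k^{(d)} to its first d − κ coordinates, and define the truncated contrastive loss term L'_d = exp(S(z_{0,s}^{(d)}, z_{0,s}^{(d)})) / (exp(S(z_{0,s}^{(d)}, z_{0,s}^{(d)})) + Σ_{k=1}^{b} exp(S(z_{0,s}^{(d)}, z_{k,s}^{(d)}))), where S is cosine similarity with the zero-division convention. Then L'_d converges to e/(e + b) in probability as d → ∞. -/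

import Mathlib

open MeasureTheory ProbabilityTheory Filter Finset

/-- Cosine similarity of two vectors in Euclidean space, with the convention
that division by zero yields `0` (which is the Lean convention for `/`). -/
noncomputable def cosSim {n : ℕ} (u v : EuclideanSpace ℝ (Fin n)) : ℝ :=
  (inner ℝ u v : ℝ) / (‖u‖ * ‖v‖)

/-- The random vector `(X 0, …, X (n-1)) ∈ ℝⁿ` built from a sequence of
real random variables; with `n = d - κ` this is the truncated representation
`z_s⁽ᵈ⁾ = (X 0, …, X (d-κ-1))`. -/
noncomputable def zvec {Ω : Type*} (X : ℕ → Ω → ℝ) (n : ℕ) (ω : Ω) :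
    EuclideanSpace ℝ (Fin n) :=
  (WithLp.equiv 2 (Fin n → ℝ)).symm fun i => X i ω

/-! By the strong law of large numbers, almost surely the empirical second moments
`(∑_{i<n} X k i ^ 2) / n` tend to `1` and, for `k ≠ 0`, the empirical cross moments
`(∑_{i<n} X 0 i * X k i) / n` tend to `E[X]² = 0`. Cosine similarity is scale invariant, so
`S(z₀, z_k)` is the cross moment divided by the square root of the product of the second moments.
Hence almost surely `S(z₀, z₀) → 1` and `S(z₀, z_k) → 0` for `k ≥ 1`, so the loss term tends to
`e / (e + b)` almost surely, and a fortiori in probability. -/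

open Topology

section zvec

variable {Ω : Type*} (X Y : ℕ → Ω → ℝ) (n : ℕ) (ω : Ω)

lemma inner_zvec : inner ℝ (zvec X n ω) (zvec Y n ω) = ∑ i ∈ range n, X i ω * Y i ω := by
  rw [PiLp.inner_apply, ← Fin.sum_univ_eq_sum_range fun i => X i ω * Y i ω]
  simp [zvec, mul_comm]

lemma norm_zvec : ‖zvec X n ω‖ = √(∑ i ∈ range n, X i ω ^ 2) := by
  rw [EuclideanSpace.norm_eq, ← Fin.sum_univ_eq_sum_range fun i => X i ω ^ 2]
  simp [zvec]

lemma cosSim_zvec : cosSim (zvec X n ω) (zvec Y n ω) =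
    (∑ i ∈ range n, X i ω * Y i ω) /
      (√(∑ i ∈ range n, X i ω ^ 2) * √(∑ i ∈ range n, Y i ω ^ 2)) := by
  rw [cosSim, inner_zvec, norm_zvec, norm_zvec]

lemma cosSim_zvec_eq_avg (hn : n ≠ 0) : cosSim (zvec X n ω) (zvec Y n ω) =
    ((∑ i ∈ range n, X i ω * Y i ω) / n) /
      √((∑ i ∈ range n, X i ω ^ 2) / n * ((∑ i ∈ range n, Y i ω ^ 2) / n)) := by
  have hn' : (0 : ℝ) < n := by positivity
  rw [cosSim_zvec, div_mul_div_comm, Real.sqrt_div' _ (by positivity), Real.sqrt_mul_self hn'.le,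
    Real.sqrt_mul (sum_nonneg fun i _ => sq_nonneg _), div_div_div_cancel_right₀ hn'.ne']

variable {X Y ω}

lemma tendsto_cosSim_zvec {r p q : ℝ}
    (hXY : Tendsto (fun n : ℕ => (∑ i ∈ range n, X i ω * Y i ω) / n) atTop (𝓝 r))
    (hX : Tendsto (fun n : ℕ => (∑ i ∈ range n, X i ω ^ 2) / n) atTop (𝓝 p))
    (hY : Tendsto (fun n : ℕ => (∑ i ∈ range n, Y i ω ^ 2) / n) atTop (𝓝 q))
    (hp : 0 < p) (hq : 0 < q) :
    Tendsto (fun n => cosSim (zvec X n ω) (zvec Y n ω)) atTop (𝓝 (r / √(p * q))) := by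
  refine (hXY.div (hX.mul hY).sqrt (by positivity)).congr' ?_
  filter_upwards [eventually_ne_atTop 0] with n hn
  exact (cosSim_zvec_eq_avg X Y n ω hn).symm

lemma aemeasurable_cosSim_zvec {mΩ : MeasurableSpace Ω} {μ : Measure Ω}
    (hX : ∀ i, AEMeasurable (X i) μ) (hY : ∀ i, AEMeasurable (Y i) μ) (n : ℕ) :
    AEMeasurable (fun ω => cosSim (zvec X n ω) (zvec Y n ω)) μ := by
  simp only [cosSim_zvec]
  fun_prop

end zvec

lemma tendsto_exp_div_exp_add_sum {ι : Type*} {f : ℕ → ℝ} {g : ι → ℕ → ℝ} {s : Finset ι}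
    {a c : ℝ} (hf : Tendsto f atTop (𝓝 a)) (hg : ∀ k ∈ s, Tendsto (g k) atTop (𝓝 c)) :
    Tendsto (fun n => Real.exp (f n) / (Real.exp (f n) + ∑ k ∈ s, Real.exp (g k n))) atTop
      (𝓝 (Real.exp a / (Real.exp a + #s * Real.exp c))) := by
  have hexp := hf.rexp
  have hsum := tendsto_finsetSum s fun k hk => (hg k hk).rexp
  rw [sum_const, nsmul_eq_mul] at hsum
  exact hexp.div (hexp.add hsum) (by positivity)

section StrongLaw

variable {Ω : Type*} {mΩ : MeasurableSpace Ω} {μ : Measure Ω}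

lemma ae_tendsto_avg_comp {E : Type*} [MeasurableSpace E] {Y : ℕ → Ω → E} {f : E → ℝ}
    (hf : Measurable f) (hindep : Pairwise (Function.onFun (· ⟂ᵢ[μ] ·) Y))
    (hident : ∀ i, IdentDistrib (Y i) (Y 0) μ μ) (hint : Integrable (fun ω => f (Y 0 ω)) μ) :
    ∀ᵐ ω ∂μ, Tendsto (fun n : ℕ => (∑ i ∈ range n, f (Y i ω)) / n) atTop
      (𝓝 (∫ ω, f (Y 0 ω) ∂μ)) :=
  strong_law_ae_real (fun i ω => f (Y i ω)) hint (fun _ _ hij => (hindep hij).comp hf hf)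
    fun i => (hident i).comp hf

variable {ι : Type*} {X : ι → ℕ → Ω → ℝ}

lemma ae_tendsto_avg_sq (hindep : iIndepFun (fun p : ι × ℕ => X p.1 p.2) μ) {k : ι}
    (hident : ∀ i, IdentDistrib (X k i) (X k 0) μ μ) (hint : Integrable (fun ω => X k 0 ω ^ 2) μ) :
    ∀ᵐ ω ∂μ, Tendsto (fun n : ℕ => (∑ i ∈ range n, X k i ω ^ 2) / n) atTop
      (𝓝 (∫ ω, X k 0 ω ^ 2 ∂μ)) :=
  ae_tendsto_avg_comp (f := fun x => x ^ 2) (by fun_prop)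
    (fun i j hij => hindep.indepFun (show ((k, i) : ι × ℕ) ≠ (k, j) by simpa using hij)) hident hint

lemma ae_tendsto_avg_mul [IsFiniteMeasure μ] (hindep : iIndepFun (fun p : ι × ℕ => X p.1 p.2) μ)
    (hmeas : ∀ k i, AEMeasurable (X k i) μ) {k l : ι} (hkl : k ≠ l)
    (hk : ∀ i, IdentDistrib (X k i) (X k 0) μ μ) (hl : ∀ i, IdentDistrib (X l i) (X l 0) μ μ)
    (hintk : Integrable (X k 0) μ) (hintl : Integrable (X l 0) μ) :
    ∀ᵐ ω ∂μ, Tendsto (fun n : ℕ => (∑ i ∈ range n, X k i ω * X l i ω) / n) atTop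
      (𝓝 ((∫ ω, X k 0 ω ∂μ) * ∫ ω, X l 0 ω ∂μ)) := by
  have hpair : ∀ i, X k i ⟂ᵢ[μ] X l i := fun i =>
    hindep.indepFun (i := (k, i)) (j := (l, i)) (by simpa using hkl)
  have h := ae_tendsto_avg_comp (Y := fun i ω => (X k i ω, X l i ω)) (f := fun p => p.1 * p.2)
    (by fun_prop)
    (fun i j hij => hindep.indepFun_prodMk_prodMk₀ (fun p => hmeas p.1 p.2) (k, i) (l, i) (k, j)
      (l, j) (by simpa using hij) (by simp [hkl]) (by simp [hkl.symm]) (by simpa using hij))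
    (fun i => (hk i).prodMk (hl i) (hpair i) (hpair 0)) ((hpair 0).integrable_mul hintk hintl)
  rwa [← (hpair 0).integral_mul_eq_mul_integral hintk.1 hintl.1]

end StrongLaw

theorem truncated_contrastive_loss_tendsto_inProbability_general
    {Ω : Type*} {mΩ : MeasurableSpace Ω} (μ : Measure Ω) [IsProbabilityMeasure μ]
    (b : ℕ) (κ : ℕ)
    (X : Fin (b + 1) → ℕ → Ω → ℝ)
    (hindep : iIndepFun (fun p : Fin (b + 1) × ℕ => X p.1 p.2) μ)
    (hident : ∀ k i, IdentDistrib (X k i) (X 0 0) μ μ)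
    (hint : Integrable (fun ω => (X 0 0 ω) ^ 2) μ)
    (hmean : ∫ ω, X 0 0 ω ∂μ = 0)
    (hsecond : ∫ ω, (X 0 0 ω) ^ 2 ∂μ = 1) :
    TendstoInMeasure μ
      (fun (d : ℕ) ω =>
        Real.exp (cosSim (zvec (X 0) (d - κ) ω) (zvec (X 0) (d - κ) ω)) /
          (Real.exp (cosSim (zvec (X 0) (d - κ) ω) (zvec (X 0) (d - κ) ω)) +
            ∑ k ∈ Finset.Ioi (0 : Fin (b + 1)),
              Real.exp (cosSim (zvec (X 0) (d - κ) ω) (zvec (X k) (d - κ) ω))))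
      atTop (fun _ => Real.exp 1 / (Real.exp 1 + b)) := by
  have hmeas : ∀ k i, AEMeasurable (X k i) μ := fun k i => (hident k i).aemeasurable_fst
  have hrow : ∀ k i, IdentDistrib (X k i) (X k 0) μ μ := fun k i =>
    (hident k i).trans (hident k 0).symm
  have hintX : ∀ k, Integrable (X k 0) μ := fun k =>
    (hident k 0).integrable_iff.2 <|
      ((memLp_two_iff_integrable_sq (hmeas 0 0).aestronglyMeasurable).2 hint).integrable one_le_two
  have hsq : ∀ᵐ ω ∂μ, ∀ k, Tendsto (fun n : ℕ => (∑ i ∈ range n, X k i ω ^ 2) / n) atTop (𝓝 1) :=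
    ae_all_iff.2 fun k => by
      have hsq_ident := (hident k 0).comp (measurable_id.pow_const 2)
      have hsecond_k : ∫ ω, X k 0 ω ^ 2 ∂μ = 1 := hsq_ident.integral_eq.trans hsecond
      simpa only [hsecond_k] using
        ae_tendsto_avg_sq hindep (hrow k) (hsq_ident.integrable_iff.2 hint)
  have hcross : ∀ᵐ ω ∂μ, ∀ k ∈ Ioi (0 : Fin (b + 1)),
      Tendsto (fun n : ℕ => (∑ i ∈ range n, X 0 i ω * X k i ω) / n) atTop (𝓝 0) := by
    refine (eventually_all_finset _).2 fun k hk => ?_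
    simpa only [hmean, zero_mul] using
      ae_tendsto_avg_mul hindep hmeas (mem_Ioi.1 hk).ne (hrow 0) (hrow k) (hintX 0) (hintX k)
  refine tendstoInMeasure_of_tendsto_ae (fun d => AEMeasurable.aestronglyMeasurable ?_) ?_
  · have := fun k => aemeasurable_cosSim_zvec (hmeas 0) (hmeas k) (d - κ)
    fun_prop
  filter_upwards [hsq, hcross] with ω hQ hA
  have hself : Tendsto (fun n => cosSim (zvec (X 0) n ω) (zvec (X 0) n ω)) atTop (𝓝 1) := by
    simpa using tendsto_cosSim_zvec (by simpa only [← sq] using hQ 0) (hQ 0) (hQ 0) one_pos one_pos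
  have hother : ∀ k ∈ Ioi (0 : Fin (b + 1)),
      Tendsto (fun n => cosSim (zvec (X 0) n ω) (zvec (X k) n ω)) atTop (𝓝 0) := fun k hk => by
    simpa using tendsto_cosSim_zvec (hA k hk) (hQ 0) (hQ k) one_pos one_pos
  have h := (tendsto_exp_div_exp_add_sum hself hother).comp (tendsto_sub_atTop_nat κ)
  rwa [Fin.card_Ioi, Real.exp_zero, mul_one, Fin.val_zero, Nat.add_sub_cancel, Nat.sub_zero] at h

/-- **Limit of the truncated contrastive loss term.**
Fix `b ≥ 1` and a truncation constant `κ`.  Let `{X k i : k ∈ {0,…,b}, i ∈ ℕ}`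
be a jointly independent family of identically distributed real random
variables with mean `0` and second moment `1`, and let
`z_{k,s}⁽ᵈ⁾ = (X k 0, …, X k (d-κ-1)) ∈ ℝ^{d-κ}` be the truncation of
`z_k⁽ᵈ⁾` to its first `d - κ` coordinates.  Then the truncated contrastive
loss term
`L'_d = exp(S(z_{0,s},z_{0,s})) / (exp(S(z_{0,s},z_{0,s})) + ∑_{k=1}^b exp(S(z_{0,s},z_{k,s})))`
converges to `e / (e + b)` in probability as `d → ∞`. -/
theorem truncated_contrastive_loss_tendsto_inProbability
    {Ω : Type*} {mΩ : MeasurableSpace Ω} (μ : Measure Ω) [IsProbabilityMeasure μ]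
    (b : ℕ) (hb : 1 ≤ b) (κ : ℕ)
    (X : Fin (b + 1) → ℕ → Ω → ℝ)
    (hmeas : ∀ k i, Measurable (X k i))
    (hindep : iIndepFun (fun p : Fin (b + 1) × ℕ => X p.1 p.2) μ)
    (hident : ∀ k i, IdentDistrib (X k i) (X 0 0) μ μ)
    (hint : Integrable (fun ω => (X 0 0 ω) ^ 2) μ)
    (hmean : ∫ ω, X 0 0 ω ∂μ = 0)
    (hsecond : ∫ ω, (X 0 0 ω) ^ 2 ∂μ = 1) :
    TendstoInMeasure μ
      (fun (d : ℕ) ω =>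
        Real.exp (cosSim (zvec (X 0) (d - κ) ω) (zvec (X 0) (d - κ) ω)) /
          (Real.exp (cosSim (zvec (X 0) (d - κ) ω) (zvec (X 0) (d - κ) ω)) +
            ∑ k ∈ Finset.Ioi (0 : Fin (b + 1)),
              Real.exp (cosSim (zvec (X 0) (d - κ) ω) (zvec (X k) (d - κ) ω))))
      atTop (fun _ => Real.exp 1 / (Real.exp 1 + b)) :=
  truncated_contrastive_loss_tendsto_inProbability_general (mΩ := mΩ) μ b κ X hindep hident hint
    hmean hsecond
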